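/- Let n ≥ 4 be an even integer and k ≥ 1, and let (u_1,…,u_k) ∈ {1,…,n}^k. Then the 2k points p_{1 u_1}, p_{1 ū_1}, p_{2 u_2}, p_{2 ū_2}, …, p_{k u_k}, p_{k ū_k} in ℝ^{2k} are affinely independent; consequently there is a unique affine hyperplane H(u_1,…,u_k) of ℝ^{2k} containing all of them. -/

import Mathlib

open scoped RealInnerProductSpace
open Real

/-!
The points come in pairs: `p_{i u_i}` and `p_{i ū_i}` are unit vectors in the `i`-th coordinate
plane whose angles differ by `2π(ū_i − u_i)/n`, and `ū_i − u_i ≡ n/2 + 1 (mod n)`. Since `n ≥ 3`,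
`n` does not divide `2(n/2 + 1) ∈ {n + 1, n + 2}`, so the `2 × 2` determinant
`sin (2π(ū_i − u_i)/n)` is nonzero. Hence each coordinate plane lies in the span of its pair, the
`2k` points span `ℝ^{2k}` and form a basis `B`; the only affine hyperplane through a basis is
`{x | B.sumCoords x = 1}`.
-/

/-- The scaffolding point `p_{iu}` in `ℝ^{2k}`: its `i`-th coordinate pair is
`(cos((u−1)·2π/n), sin((u−1)·2π/n))` and its other coordinates are `0`. -/
noncomputable def scafPt (n k : ℕ) (i : Fin k) (u : ℕ) :
    EuclideanSpace ℝ (Fin (2 * k)) :=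
  (WithLp.equiv 2 (Fin (2 * k) → ℝ)).symm fun idx =>
    if (idx : ℕ) = 2 * (i : ℕ) then Real.cos (((u : ℝ) - 1) * (2 * Real.pi) / n)
    else if (idx : ℕ) = 2 * (i : ℕ) + 1 then Real.sin (((u : ℝ) - 1) * (2 * Real.pi) / n)
    else 0

/-- The scaffolding point set `P = {p_{iu} : 1 ≤ i ≤ k, 1 ≤ u ≤ n}`. -/
noncomputable def scafSet (n k : ℕ) : Set (EuclideanSpace ℝ (Fin (2 * k))) :=
  {x | ∃ i : Fin k, ∃ u ∈ Finset.Icc 1 n, x = scafPt n k i u}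

/-- The antipodal partner `u' ∈ {1,…,n}` of `u ∈ {1,…,n}`: the unique element of
`{1,…,n}` congruent to `u + n/2` modulo `n`. -/
def antip (n u : ℕ) : ℕ := (u - 1 + n / 2) % n + 1

/-- The almost antipodal partner `ū ∈ {1,…,n}` of `u ∈ {1,…,n}`: the unique element of
`{1,…,n}` congruent to `u + n/2 + 1` modulo `n`. -/
def almostAntip (n u : ℕ) : ℕ := (u - 1 + n / 2 + 1) % n + 1

/-- The half of the scaffolding set selected by a tuple `(u_1,…,u_k) ∈ {1,…,n}^k`:
`P(u_1,…,u_k) = {p_{it} : 1 ≤ i ≤ k, t ∈ {1,…,n}, t ≡ u_i − s (mod n)` for some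
`s ∈ {0,…,n/2−1}}`. -/
noncomputable def scafHalf (n k : ℕ) (U : Fin k → ℕ) :
    Set (EuclideanSpace ℝ (Fin (2 * k))) :=
  {x | ∃ i : Fin k, ∃ t ∈ Finset.Icc 1 n,
    (∃ s < n / 2, t + s ≡ U i [MOD n]) ∧ x = scafPt n k i t}

/-- The affine hyperplane `{x : ⟪a, x⟫ = b}`. -/
def hyp {k : ℕ} (a : EuclideanSpace ℝ (Fin (2 * k))) (b : ℝ) :
    Set (EuclideanSpace ℝ (Fin (2 * k))) := {x | ⟪a, x⟫ = b}

/-- The family of `2k` points `p_{1u_1}, p_{1ū_1}, …, p_{ku_k}, p_{kū_k}` indexed by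
`Fin (2k)`: the `(2m)`-th point is `p_{m u_m}` and the `(2m+1)`-th is `p_{m ū_m}`. -/
noncomputable def boundaryPts (n k : ℕ) (U : Fin k → ℕ) (m : Fin (2 * k)) :
    EuclideanSpace ℝ (Fin (2 * k)) :=
  let i : Fin k := ⟨(m : ℕ) / 2, by have := m.2; omega⟩
  if (m : ℕ) % 2 = 0 then scafPt n k i (U i) else scafPt n k i (almostAntip n (U i))

open Module Submodule

theorem span_pair_le_span_pair_of_det_ne_zero {K V : Type*} [Field K] [AddCommGroup V]
    [Module K V] {e f : V} {a b c d : K} (hdet : a * d - b * c ≠ 0) :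
    span K {e, f} ≤ span K {a • e + b • f, c • e + d • f} := by
  set D := a * d - b * c with hD
  rw [span_le, Set.insert_subset_iff, Set.singleton_subset_iff, SetLike.mem_coe,
    SetLike.mem_coe, mem_span_pair, mem_span_pair]
  constructor
  · refine ⟨d / D, -b / D, ?_⟩
    match_scalars <;> field_simp <;> linear_combination hD
  · refine ⟨-c / D, a / D, ?_⟩
    match_scalars <;> field_simp <;> linear_combination hD

theorem setOf_inner_eq_eq_sumCoords {ι E : Type*} [Fintype ι] [NormedAddCommGroup E]
    [InnerProductSpace ℝ E] (B : Basis ι ℝ E) {a : E} {b : ℝ} (ha : a ≠ 0)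
    (hB : ∀ i, ⟪a, B i⟫ = b) : {x | ⟪a, x⟫ = b} = {x | B.sumCoords x = 1} := by
  have hfun : innerₛₗ ℝ a = b • B.sumCoords := B.ext fun i => by simp [hB]
  have hb : b ≠ 0 := by
    rintro rfl
    apply ha
    simpa using LinearMap.congr_fun hfun a
  ext x
  simp only [Set.mem_ofPred_eq, ← innerₛₗ_apply_apply, hfun, LinearMap.smul_apply, smul_eq_mul,
    mul_eq_left₀ hb]

theorem existsUnique_hyperplane_through_basis {ι E : Type*} [Fintype ι] [Nonempty ι]
    [NormedAddCommGroup E] [InnerProductSpace ℝ E] (B : Basis ι ℝ E) :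
    ∃! H : Set E, (∃ (a : E) (b : ℝ), a ≠ 0 ∧ H = {x | ⟪a, x⟫ = b}) ∧ ∀ i, B i ∈ H := by
  have := Module.Finite.of_basis B
  set a : E := (InnerProductSpace.toDual ℝ E).symm (LinearMap.toContinuousLinearMap B.sumCoords)
  have ha : ∀ x, ⟪a, x⟫ = B.sumCoords x := fun x => InnerProductSpace.toDual_symm_apply
  have haB : ∀ i, ⟪a, B i⟫ = 1 := by simp [ha]
  have ha0 : a ≠ 0 := by
    rintro h
    simpa [h] using haB (Classical.arbitrary ι)
  refine ⟨{x | ⟪a, x⟫ = 1}, ⟨⟨a, 1, ha0, rfl⟩, haB⟩, ?_⟩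
  rintro H ⟨⟨a', b', ha', rfl⟩, hmem⟩
  rw [setOf_inner_eq_eq_sumCoords B ha' hmem, setOf_inner_eq_eq_sumCoords B ha0 haB]

theorem sin_int_mul_two_pi_div_ne_zero {n : ℕ} (hn : n ≠ 0) {j : ℤ} (h : ¬ (n : ℤ) ∣ 2 * j) :
    sin (j * (2 * π) / n) ≠ 0 := by
  rw [Ne, sin_eq_zero_iff]
  rintro ⟨m, hm⟩
  refine h ⟨m, ?_⟩
  have : (m : ℝ) * n = 2 * j := by
    field_simp at hm
    linarith [pi_pos]
  exact_mod_cast this.symm.trans (mul_comm _ _)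

theorem not_dvd_two_mul_half_add_one {n : ℕ} (hn : 3 ≤ n) : ¬ n ∣ 2 * (n / 2 + 1) := by
  rw [show 2 * (n / 2 + 1) = n + (2 - n % 2) by omega, Nat.dvd_add_right (dvd_refl n)]
  intro h
  have := Nat.le_of_dvd (by omega) h
  omega

theorem almostAntip_sub_modEq {n u : ℕ} (hu : 1 ≤ u) :
    (almostAntip n u : ℤ) - u ≡ (n / 2 : ℕ) + 1 [ZMOD n] := by
  have h := ((Int.mod_modEq ((u - 1 + n / 2 + 1 : ℕ) : ℤ) n).add_right 1).sub_right (u : ℤ)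
  unfold almostAntip
  push_cast [Nat.cast_sub hu] at h ⊢
  convert h using 1
  ring

theorem sin_angle_almostAntip_sub_ne_zero {n u : ℕ} (hn : 3 ≤ n) (hu : 1 ≤ u) :
    sin (((almostAntip n u : ℝ) - 1) * (2 * π) / n - ((u : ℝ) - 1) * (2 * π) / n) ≠ 0 := by
  have hsub : ((almostAntip n u : ℝ) - 1) * (2 * π) / n - ((u : ℝ) - 1) * (2 * π) / n
      = (((almostAntip n u : ℤ) - u : ℤ) : ℝ) * (2 * π) / n := by
    push_cast
    ring
  rw [hsub]
  refine sin_int_mul_two_pi_div_ne_zero (by omega) fun hdvd => not_dvd_two_mul_half_add_one hn ?_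
  have h := (almostAntip_sub_modEq (n := n) hu).mul_left 2
  exact_mod_cast Int.modEq_zero_iff_dvd.1 (h.symm.trans (Int.modEq_zero_iff_dvd.2 hdvd))

theorem scafPt_eq_add_single {n k : ℕ} (i : Fin k) (u : ℕ) :
    scafPt n k i u =
      cos (((u : ℝ) - 1) * (2 * π) / n) • EuclideanSpace.single ⟨2 * i, by omega⟩ 1 +
      sin (((u : ℝ) - 1) * (2 * π) / n) • EuclideanSpace.single ⟨2 * i + 1, by omega⟩ 1 := by
  ext j
  simp only [scafPt, PiLp.add_apply, PiLp.smul_apply, PiLp.single_apply, Fin.ext_iff]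
  split_ifs <;> simp_all

theorem span_single_pair_le_span_scafPt {n k u : ℕ} (hn : 3 ≤ n) (hu : 1 ≤ u) (i : Fin k) :
    span ℝ {EuclideanSpace.single ⟨2 * i, by omega⟩ 1,
        EuclideanSpace.single ⟨2 * i + 1, by omega⟩ 1}
      ≤ span ℝ {scafPt n k i u, scafPt n k i (almostAntip n u)} := by
  rw [scafPt_eq_add_single, scafPt_eq_add_single]
  refine span_pair_le_span_pair_of_det_ne_zero ?_
  convert sin_angle_almostAntip_sub_ne_zero hn hu using 1
  rw [sin_sub]
  ring

theorem boundaryPts_two_mul {n k : ℕ} (U : Fin k → ℕ) (i : Fin k) :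
    boundaryPts n k U ⟨2 * i, by omega⟩ = scafPt n k i (U i) := by
  simp [boundaryPts]

theorem boundaryPts_two_mul_add_one {n k : ℕ} (U : Fin k → ℕ) (i : Fin k) :
    boundaryPts n k U ⟨2 * i + 1, by omega⟩ = scafPt n k i (almostAntip n (U i)) := by
  simp [boundaryPts, show (2 * (i : ℕ) + 1) / 2 = i by omega]

theorem top_le_span_range_boundaryPts {n k : ℕ} (hn : 3 ≤ n) {U : Fin k → ℕ}
    (hU : ∀ i, 1 ≤ U i) : ⊤ ≤ span ℝ (Set.range (boundaryPts n k U)) := by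
  rw [← (EuclideanSpace.basisFun (Fin (2 * k)) ℝ).toBasis.span_eq, span_le]
  rintro _ ⟨j, rfl⟩
  rw [OrthonormalBasis.coe_toBasis, EuclideanSpace.basisFun_apply]
  let i : Fin k := ⟨j / 2, by omega⟩
  have hj : EuclideanSpace.single j (1 : ℝ) ∈ span ℝ {EuclideanSpace.single ⟨2 * i, by omega⟩ 1,
      EuclideanSpace.single ⟨2 * i + 1, by omega⟩ 1} := by
    obtain h | h : (j : ℕ) = 2 * i ∨ (j : ℕ) = 2 * i + 1 := by simp only [i]; omega
    all_goals exact subset_span (by simp [← h])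
  refine (span_single_pair_le_span_scafPt hn (hU i) i).trans (span_mono ?_) hj
  rw [← boundaryPts_two_mul, ← boundaryPts_two_mul_add_one]
  exact Set.pair_subset (Set.mem_range_self _) (Set.mem_range_self _)

theorem boundaryPts_affineIndependent_general (n k : ℕ) (hn : 4 ≤ n)
    (hk : 1 ≤ k) (U : Fin k → ℕ) (hU : ∀ m, U m ∈ Finset.Icc 1 n) :
    AffineIndependent ℝ (boundaryPts n k U)
    ∧ ∃! H : Set (EuclideanSpace ℝ (Fin (2 * k))),
        (∃ (a : EuclideanSpace ℝ (Fin (2 * k))) (b : ℝ), a ≠ 0 ∧ H = hyp a b)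
        ∧ ∀ m : Fin (2 * k), boundaryPts n k U m ∈ H := by
  have hspan := top_le_span_range_boundaryPts (show 3 ≤ n by omega) fun i =>
    (Finset.mem_Icc.1 (hU i)).1
  have hcard : Fintype.card (Fin (2 * k)) = finrank ℝ (EuclideanSpace ℝ (Fin (2 * k))) := by simp
  have : Nonempty (Fin (2 * k)) := ⟨⟨0, by omega⟩⟩
  refine ⟨(linearIndependent_of_top_le_span_of_card_eq_finrank hspan hcard).affineIndependent, ?_⟩
  simpa [hyp] using
    existsUnique_hyperplane_through_basis (basisOfTopLeSpanOfCardEqFinrank _ hspan hcard)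

/-- The `2k` points `p_{1u_1}, p_{1ū_1}, …, p_{ku_k}, p_{kū_k}` are affinely independent;
consequently there is a unique affine hyperplane `H(u_1,…,u_k)` containing all of them. -/
theorem boundaryPts_affineIndependent (n k : ℕ) (hn : 4 ≤ n) (hneven : Even n)
    (hk : 1 ≤ k) (U : Fin k → ℕ) (hU : ∀ m, U m ∈ Finset.Icc 1 n) :
    AffineIndependent ℝ (boundaryPts n k U)
    ∧ ∃! H : Set (EuclideanSpace ℝ (Fin (2 * k))),
        (∃ (a : EuclideanSpace ℝ (Fin (2 * k))) (b : ℝ), a ≠ 0 ∧ H = hyp a b)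
        ∧ ∀ m : Fin (2 * k), boundaryPts n k U m ∈ H :=
  boundaryPts_affineIndependent_general n k hn hk U hU
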